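/- For n ≥ 4, each maximal zero y_j (the point with 0's exactly in coordinates 1 and j, 2 ≤ j ≤ n-1) of the function f_n is not an essential point: any Boolean function g that agrees with f_n everywhere except at y_j (where g(y_j)=1) is not a threshold function. (Proof via 2-summability: x_j + y_j = z_1 + z_2 where x_j has 1's exactly in coordinates 1 and j, z_1 has 0's exactly in coordinates 1 and n, z_2 has 1's exactly in coordinates 1 and n.) -/
import Mathlib


/-- The real vector in `ℝ^n` corresponding to a Boolean point. -/
def toR {n : ℕ} (x : Fin n → Bool) : Fin n → ℝ := fun i => if x i then 1 else 0

/-- The maximal zeros `y_j` of `f_n` (0's exactly in coordinates `x₁` and `x_j`,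
`2 ≤ j ≤ n-1`, 0-based indexing) are not essential: any Boolean function agreeing
with `f_n` everywhere except at `y_j`, where it takes value 1, is not threshold. -/
theorem fn_yj_not_essential (n : ℕ) (hn : 4 ≤ n) (f : (Fin n → Bool) → Bool)
    (hf : ∀ x, f x = true ↔
      ((x ⟨0, by omega⟩ = true ∧ ∃ i : Fin n, 1 ≤ i.1 ∧ i.1 ≤ n - 2 ∧ x i = true) ∨
        (∀ i : Fin n, 1 ≤ i.1 → x i = true)))
    (j : Fin n) (hj : 1 ≤ j.1 ∧ j.1 ≤ n - 2)
    (y : Fin n → Bool) (hy : ∀ i, y i = false ↔ (i.1 = 0 ∨ i = j))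
    (g : (Fin n → Bool) → Bool)
    (hgy : g y = true) (hg : ∀ x, x ≠ y → g x = f x) :
    ¬ ∃ (w : Fin n → ℝ) (t : ℝ), ∀ x, g x = false ↔ ∑ i, w i * toR x i ≤ t := by
  rintro ⟨w, t, hw⟩
  obtain ⟨hj1, hj2⟩ := hj
  have h0n : 0 < n := by omega
  have hy0 : y ⟨0, h0n⟩ = false := (hy _).2 (Or.inl rfl)
  set x : Fin n → Bool := fun i => decide (i.1 = 0 ∨ i = j) with hxdef
  set z1 : Fin n → Bool := fun i => decide (¬(i.1 = 0 ∨ i.1 = n - 1)) with hz1def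
  set z2 : Fin n → Bool := fun i => decide (i.1 = 0 ∨ i.1 = n - 1) with hz2def
  have hgx : g x = true := by
    rw [hg x (by
      intro h
      have := congrFun h ⟨0, h0n⟩
      rw [hy0] at this
      simp [hxdef] at this)]
    rw [hf]
    exact Or.inl ⟨by simp [hxdef], j, hj1, hj2, by simp [hxdef]⟩
  have hgz1 : g z1 = false := by
    rw [hg z1 (by
      intro h
      have h2 := congrFun h j
      rw [(hy j).2 (Or.inr rfl)] at h2
      simp [hz1def] at h2
      omega)]
    rw [Bool.eq_false_iff]
    intro h
    rw [hf] at h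
    rcases h with ⟨h1, _⟩ | h2
    · simp [hz1def] at h1
    · have := h2 ⟨n - 1, by omega⟩ (by simp; omega)
      simp [hz1def] at this
  have hgz2 : g z2 = false := by
    rw [hg z2 (by
      intro h
      have := congrFun h ⟨0, h0n⟩
      rw [hy0] at this
      simp [hz2def] at this)]
    rw [Bool.eq_false_iff]
    intro h
    rw [hf] at h
    rcases h with ⟨_, i, hi1, hi2, hi3⟩ | h2
    · simp [hz2def] at hi3
      omega
    · have := h2 ⟨1, by omega⟩ (by simp)
      simp [hz2def] at this
      omega
  have sx : t < ∑ i, w i * toR x i := by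
    by_contra h
    rw [((hw x).2 (not_lt.mp h))] at hgx
    exact Bool.false_ne_true hgx
  have sy : t < ∑ i, w i * toR y i := by
    by_contra h
    rw [((hw y).2 (not_lt.mp h))] at hgy
    exact Bool.false_ne_true hgy
  have s1 : ∑ i, w i * toR z1 i ≤ t := (hw z1).1 hgz1
  have s2 : ∑ i, w i * toR z2 i ≤ t := (hw z2).1 hgz2
  have key : (∑ i, w i * toR x i) + ∑ i, w i * toR y i
      = (∑ i, w i * toR z1 i) + ∑ i, w i * toR z2 i := by
    rw [← Finset.sum_add_distrib, ← Finset.sum_add_distrib]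
    apply Finset.sum_congr rfl
    intro i _
    simp only [toR, hxdef, hz1def, hz2def]
    by_cases h0 : i.1 = 0
    · have hij : i ≠ j := fun h => by rw [h] at h0; omega
      have hyi : y i = false := (hy i).2 (Or.inl h0)
      simp [h0, hij, hyi]
    · by_cases hij : i = j
      · have hnl : i.1 ≠ n - 1 := by rw [hij]; omega
        have hyi : y i = false := (hy i).2 (Or.inr hij)
        subst hij
        simp [hyi, hnl, show ¬(i.1 = 0) from h0]
      · have hyi : y i = true := by
          rw [← Bool.not_eq_false, hy i]
          tauto
        have hn1 : n - 1 ≠ 0 := by omega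
        by_cases hnl : i.1 = n - 1
        · simp [h0, hij, hnl, hyi, hn1]
        · simp [h0, hij, hnl, hyi]
  linarith
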